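/- arXiv:1403.5209 — 2 statements merged into one kernel-verified Lean document; each statement's English description precedes it below -/
import Mathlib

section
/- If f ≃ f₁ + f₂ + ⋯ and f ≃ g₁ + g₂ + ⋯ are two expansions of the same function f : X → E in series of simple functions, then ∑ₙ ∫ fₙ = ∑ₙ ∫ gₙ; hence the Bochner integral ∫ f := ∑ₙ ∫ fₙ is well defined. -/
open Filter Topology

section Defs

variable {X : Type*}

def IsSetRing (R : Set (Set X)) : Prop :=
  ∀ A ∈ R, ∀ B ∈ R, A ∪ B ∈ R ∧ A \ B ∈ R

def IsPremeasure (R : Set (Set X)) (μ : Set X → ℝ) : Prop :=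
  (∀ A ∈ R, 0 ≤ μ A) ∧
  ∀ A : ℕ → Set X, (∀ n, A n ∈ R) → Pairwise (Function.onFun Disjoint A) →
    (⋃ n, A n) ∈ R → HasSum (fun n => μ (A n)) (μ (⋃ n, A n))

variable {E : Type*} [AddCommGroup E] [Module ℝ E]

/-- `f` is a simple function (finite combination of indicators of sets in `R`)
with integral `v = ∑ μ(Aᵢ) • vᵢ`. -/
def IsSimpleWithIntegral (R : Set (Set X)) (μ : Set X → ℝ) (f : X → E) (v : E) : Prop :=
  ∃ (n : ℕ) (c : Fin n → E) (A : Fin n → Set X),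
    (∀ i, A i ∈ R) ∧
    (∀ x, f x = ∑ i, Set.indicator (A i) (fun _ => c i) x) ∧
    v = ∑ i, μ (A i) • c i

def IsSimpleFunc (R : Set (Set X)) (μ : Set X → ℝ) (f : X → E) : Prop :=
  ∃ v, IsSimpleWithIntegral R μ f v

end Defs

section Banach

variable {X : Type*} {E : Type*} [NormedAddCommGroup E] [NormedSpace ℝ E]

/-- `f ≃ g₁ + g₂ + ⋯` : expansion of `f` in a series of simple functions. -/
def SeriesExpansion (R : Set (Set X)) (μ : Set X → ℝ) (f : X → E) (g : ℕ → X → E) : Prop :=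
  (∀ n, IsSimpleFunc R μ (g n)) ∧
  (∃ c : ℕ → ℝ, (∀ n, IsSimpleWithIntegral R μ (fun x => ‖g n x‖) (c n)) ∧ Summable c) ∧
  ∀ x, Summable (fun n => ‖g n x‖) → HasSum (fun n => g n x) (f x)

def BochnerIntegrable (R : Set (Set X)) (μ : Set X → ℝ) (f : X → E) : Prop :=
  ∃ g, SeriesExpansion R μ f g

def HasBochnerIntegral (R : Set (Set X)) (μ : Set X → ℝ) (f : X → E) (I : E) : Prop :=
  ∃ g, SeriesExpansion R μ f g ∧
    ∃ J : ℕ → E, (∀ n, IsSimpleWithIntegral R μ (g n) (J n)) ∧ HasSum J I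

def IsNullSet (R : Set (Set X)) (μ : Set X → ℝ) (Z : Set X) : Prop :=
  HasBochnerIntegral R μ (Set.indicator Z fun _ => (1 : ℝ)) 0

end Banach

/-!
The premeasure `μ` on the ring `R` extends, by Carathéodory's construction, to a measure `ν` on
the σ-algebra generated by `R` (if `R` is empty, every measure does). Simple functions are
`ν`-integrable with the expected integral, and `∑ₙ ∫ ‖gₙ‖ < ∞` forces `∑ₙ ‖gₙ x‖ < ∞` for
`ν`-almost every `x`, so that `∑ₙ gₙ = f` almost everywhere. Integrating termwise,
`∑ₙ ∫ gₙ = ∫ f dν` for every expansion of `f`.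
-/

open Set
open scoped ENNReal

section

variable {X : Type*} {R : Set (Set X)} {μ : Set X → ℝ}

namespace IsSetRing

theorem empty_mem_of_mem (hR : IsSetRing R) {A : Set X} (hA : A ∈ R) : ∅ ∈ R := by
  simpa using (hR A hA A hA).2

theorem isSetRing_of_empty_mem (hR : IsSetRing R) (h0 : ∅ ∈ R) : MeasureTheory.IsSetRing R where
  empty_mem := h0
  union_mem _ _ hs ht := (hR _ hs _ ht).1
  sdiff_mem _ _ hs ht := (hR _ hs _ ht).2

end IsSetRing

def MeasureTheory.Measure.IsExtension [MeasurableSpace X] (ν : MeasureTheory.Measure X)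
    (R : Set (Set X)) (μ : Set X → ℝ) : Prop :=
  ∀ s ∈ R, MeasurableSet s ∧ ν s = ENNReal.ofReal (μ s)

namespace IsPremeasure

open MeasureTheory (AddContent Measure)

theorem map_empty (hμ : IsPremeasure R μ) (h0 : ∅ ∈ R) : μ ∅ = 0 := by
  have h := hμ.2 (fun _ => ∅) (fun _ => h0) (fun _ _ _ => disjoint_bot_left) (by simpa using h0)
  exact (summable_const_iff _).1 h.summable

theorem map_union (hμ : IsPremeasure R μ) (hR : IsSetRing R) {A B : Set X}
    (hA : A ∈ R) (hB : B ∈ R) (hAB : Disjoint A B) : μ (A ∪ B) = μ A + μ B := by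
  have h0 := hR.empty_mem_of_mem hA
  let s : ℕ → Set X := fun n => if n = 0 then A else if n = 1 then B else ∅
  have hs : ∀ n, s n ∈ R := fun n => by dsimp only [s]; split_ifs <;> assumption
  have hs_disj : Pairwise (Function.onFun Disjoint s) := by
    intro i j hij
    dsimp only [Function.onFun, s]
    split_ifs <;> first | omega | exact hAB | exact hAB.symm | simp
  have hs_union : ⋃ n, s n = A ∪ B := by
    ext x
    simp only [mem_iUnion, mem_union, s]
    constructor
    · rintro ⟨n, hn⟩
      split_ifs at hn <;> simp_all
    · rintro (hx | hx)
      exacts [⟨0, by simpa⟩, ⟨1, by simpa⟩]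
  have h_sum : HasSum (fun n => μ (s n)) (μ A + μ B) := by
    have h_vanish : ∀ n ∉ Finset.range 2, μ (s n) = 0 := fun n hn => by
      simp only [Finset.mem_range, not_lt] at hn
      simp [s, show n ≠ 0 by omega, show n ≠ 1 by omega, hμ.map_empty h0]
    simpa [Finset.sum_range_succ, s] using hasSum_sum_of_ne_finset_zero h_vanish
  have h := hμ.2 s hs hs_disj (hs_union ▸ (hR A hA B hB).1)
  rw [hs_union] at h
  exact h.unique h_sum

noncomputable def toAddContent (hμ : IsPremeasure R μ) (hR : IsSetRing R) (h0 : ∅ ∈ R) :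
    AddContent ℝ≥0∞ R :=
  (hR.isSetRing_of_empty_mem h0).addContent_of_union (fun s => ENNReal.ofReal (μ s))
    (by simp [hμ.map_empty h0]) fun hs ht hst => by
      rw [hμ.map_union hR hs ht hst, ENNReal.ofReal_add (hμ.1 _ hs) (hμ.1 _ ht)]

theorem toAddContent_apply (hμ : IsPremeasure R μ) (hR : IsSetRing R) (h0 : ∅ ∈ R)
    (s : Set X) : hμ.toAddContent hR h0 s = ENNReal.ofReal (μ s) :=
  rfl

theorem toAddContent_iUnion (hμ : IsPremeasure R μ) (hR : IsSetRing R) (h0 : ∅ ∈ R)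
    (f : ℕ → Set X) (hf : ∀ i, f i ∈ R) (hf_union : ⋃ i, f i ∈ R)
    (hf_disj : Pairwise (Function.onFun Disjoint f)) :
    hμ.toAddContent hR h0 (⋃ i, f i) = ∑' i, hμ.toAddContent hR h0 (f i) := by
  have h := hμ.2 f hf hf_disj hf_union
  simp only [toAddContent_apply]
  rw [← h.tsum_eq, ENNReal.ofReal_tsum_of_nonneg (fun i => hμ.1 _ (hf i)) h.summable]

theorem exists_measure_extension (hμ : IsPremeasure R μ) (hR : IsSetRing R) :
    ∃ (_ : MeasurableSpace X) (ν : Measure X), ν.IsExtension R μ := by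
  by_cases h0 : ∅ ∈ R
  · have hR' := hR.isSetRing_of_empty_mem h0
    have h_subadd : (hμ.toAddContent hR h0).IsSigmaSubadditive :=
      MeasureTheory.isSigmaSubadditive_of_addContent_iUnion_eq_tsum hR'
        (hμ.toAddContent_iUnion hR h0)
    let : MeasurableSpace X := MeasurableSpace.generateFrom R
    exact ⟨_, (hμ.toAddContent hR h0).measure hR'.isSetSemiring le_rfl h_subadd, fun s hs =>
      ⟨MeasurableSpace.measurableSet_generateFrom hs,
        AddContent.measure_eq _ hR'.isSetSemiring rfl h_subadd hs⟩⟩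
  · exact ⟨⊤, 0, fun s hs => absurd (hR.empty_mem_of_mem hs) h0⟩

end IsPremeasure

section Integral

open MeasureTheory

variable {E : Type*} [NormedAddCommGroup E] [MeasurableSpace X] {ν : Measure X}

theorem MeasureTheory.Measure.IsExtension.integrable_indicator_const (hν : ν.IsExtension R μ)
    {s : Set X} (hs : s ∈ R) (c : E) : Integrable (s.indicator fun _ => c) ν :=
  (integrable_indicator_iff (hν s hs).1).2 <|
    integrableOn_const (by rw [(hν s hs).2]; exact ENNReal.ofReal_ne_top)

variable [NormedSpace ℝ E]

theorem IsSimpleWithIntegral.integrable (hν : ν.IsExtension R μ) {φ : X → E} {v : E}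
    (hφ : IsSimpleWithIntegral R μ φ v) : Integrable φ ν := by
  obtain ⟨n, c, A, hA, hφ, -⟩ := hφ
  rw [funext hφ]
  exact integrable_finsetSum _ fun i _ => hν.integrable_indicator_const (hA i) (c i)

theorem IsSimpleWithIntegral.integral_eq [CompleteSpace E] (hν : ν.IsExtension R μ)
    (hμ : ∀ s ∈ R, 0 ≤ μ s) {φ : X → E} {v : E} (hφ : IsSimpleWithIntegral R μ φ v) :
    ∫ x, φ x ∂ν = v := by
  obtain ⟨n, c, A, hA, hφ, rfl⟩ := hφ
  simp only [funext hφ]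
  rw [integral_finsetSum _ fun i _ => hν.integrable_indicator_const (hA i) (c i)]
  refine Finset.sum_congr rfl fun i _ => ?_
  rw [integral_indicator_const _ (hν _ (hA i)).1, measureReal_def, (hν _ (hA i)).2,
    ENNReal.toReal_ofReal (hμ _ (hA i))]

theorem SeriesExpansion.hasSum_integral [CompleteSpace E] (hν : ν.IsExtension R μ)
    (hμ : ∀ s ∈ R, 0 ≤ μ s) {f : X → E} {g : ℕ → X → E} (hfg : SeriesExpansion R μ f g) {J : ℕ → E}
    (hJ : ∀ n, IsSimpleWithIntegral R μ (g n) (J n)) :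
    HasSum J (∫ x, f x ∂ν) := by
  obtain ⟨-, ⟨c, hc, hc_sum⟩, hf⟩ := hfg
  have hg_int : ∀ n, Integrable (g n) ν := fun n => (hJ n).integrable hν
  have h_summable : Summable fun n => ∫ x, ‖g n x‖ ∂ν := by
    simpa only [fun n => (hc n).integral_eq hν hμ] using hc_sum
  have h_ae : ∀ᵐ x ∂ν, Summable fun n => ‖g n x‖ := by
    refine summable_norm_of_tsum_eLpNorm_ne_top le_rfl (fun n => (hg_int n).1) ?_
    simp_rw [eLpNorm_one_eq_lintegral_enorm, ← ofReal_integral_norm_eq_lintegral_enorm (hg_int _),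
      ← ENNReal.ofReal_tsum_of_nonneg (fun n => integral_nonneg fun _ => norm_nonneg _)
        h_summable]
    exact ENNReal.ofReal_ne_top
  have h_sum := hasSum_integral_of_summable_integral_norm hg_int h_summable
  simp only [fun n => (hJ n).integral_eq hν hμ] at h_sum
  rwa [integral_congr_ae (h_ae.mono fun x hx => (hf x hx).tsum_eq)] at h_sum

end Integral

end

/-- The Bochner integral is independent of the expansion in simple functions. -/
theorem stmt4 {X E : Type*} [NormedAddCommGroup E] [NormedSpace ℝ E] [CompleteSpace E]
    {R : Set (Set X)} {μ : Set X → ℝ} (hR : IsSetRing R) (hμ : IsPremeasure R μ)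
    (f : X → E) (g h : ℕ → X → E)
    (hfg : SeriesExpansion R μ f g) (hfh : SeriesExpansion R μ f h)
    (J K : ℕ → E)
    (hJ : ∀ n, IsSimpleWithIntegral R μ (g n) (J n))
    (hK : ∀ n, IsSimpleWithIntegral R μ (h n) (K n))
    (I₁ I₂ : E) (hI₁ : HasSum J I₁) (hI₂ : HasSum K I₂) :
    I₁ = I₂ := by
  obtain ⟨_, ν, hν⟩ := hμ.exists_measure_extension hR
  rw [hI₁.unique (hfg.hasSum_integral hν hμ.1 hJ), hI₂.unique (hfh.hasSum_integral hν hμ.1 hK)]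
end

section
/- If f is Bochner integrable, then for every ε > 0 there exists an expansion f ≃ f₁ + f₂ + ⋯ in simple functions such that ∑ₙ ∫‖fₙ‖ dμ ≤ ∫ ‖f‖ dμ + ε. -/
open Filter Topology

/-!
Take any expansion `f ≃ ∑ hₙ` and an expansion `‖f‖ ≃ ∑ φₙ` with `∑ ∫ φₙ = ∫ ‖f‖`. Choose `N`
with `∑_{n ≥ N} ∫ ‖hₙ‖ < ε / 2` and regroup the head: `f ≃ s + h_N + h_{N+1} + ⋯` where
`s = h₀ + ⋯ + h_{N-1}`. Wherever the series involved converge absolutely,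
`‖s‖ ≤ ‖f‖ + ∑_{n ≥ N} ‖hₙ‖ = ∑ φₙ + ∑_{n ≥ N} ‖hₙ‖`, and integrating such a pointwise inequality
between series gives `∫ ‖s‖ ≤ ∫ ‖f‖ + ε / 2`. That integration step is done by extending `μ` to a
measure (Carathéodory) and applying dominated convergence to the series.
-/

open scoped ENNReal

section Sequence

variable {α : Type*}

def seqCons (a : α) (s : ℕ → α) : ℕ → α
  | 0 => a
  | n + 1 => s n

theorem comp_seqCons {β : Type*} (F : α → β) (a : α) (s : ℕ → α) :
    (fun n => F (seqCons a s n)) = seqCons (F a) fun n => F (s n) := by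
  funext n; cases n <;> rfl

theorem iUnion_seqCons (A : Set α) (s : ℕ → Set α) : ⋃ n, seqCons A s n = A ∪ ⋃ n, s n :=
  (Set.union_iUnion_nat_succ _).symm

variable [AddCommGroup α] [TopologicalSpace α] [IsTopologicalAddGroup α]

theorem hasSum_seqCons_iff {a b : α} {s : ℕ → α} : HasSum (seqCons a s) b ↔ HasSum s (b - a) := by
  rw [← hasSum_nat_add_iff' 1, Finset.sum_range_one]
  rfl

theorem summable_seqCons_iff {a : α} {s : ℕ → α} : Summable (seqCons a s) ↔ Summable s :=
  (summable_nat_add_iff 1).symm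

theorem tsum_seqCons [T2Space α] {a : α} {s : ℕ → α} (hs : Summable s) :
    ∑' n, seqCons a s n = a + ∑' n, s n :=
  (summable_seqCons_iff.2 hs).tsum_eq_zero_add

theorem hasSum_seqCons_sum_range_iff {g : ℕ → α} {b : α} (N : ℕ) :
    HasSum (seqCons (∑ i ∈ Finset.range N, g i) fun k => g (k + N)) b ↔ HasSum g b :=
  hasSum_seqCons_iff.trans (hasSum_nat_add_iff' N)

end Sequence

theorem norm_sum_range_le_of_hasSum {E : Type*} [NormedAddCommGroup E] {g : ℕ → E} {a : E}
    (hg : HasSum g a) (N : ℕ) (hs : Summable fun k => ‖g (k + N)‖) :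
    ‖∑ i ∈ Finset.range N, g i‖ ≤ ‖a‖ + ∑' k, ‖g (k + N)‖ := by
  have htail : ∑' k, g (k + N) = a - ∑ i ∈ Finset.range N, g i :=
    ((hasSum_nat_add_iff' N).2 hg).tsum_eq
  calc ‖∑ i ∈ Finset.range N, g i‖ = ‖a - ∑' k, g (k + N)‖ := by rw [htail, sub_sub_cancel]
    _ ≤ ‖a‖ + ‖∑' k, g (k + N)‖ := norm_sub_le _ _
    _ ≤ ‖a‖ + ∑' k, ‖g (k + N)‖ := by gcongr; exact norm_tsum_le_tsum_norm hs

section SetRing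

variable {X : Type*} {R : Set (Set X)} {μ : Set X → ℝ}

theorem IsSetRing.isSetRing (hR : IsSetRing R) {A : Set X} (hA : A ∈ R) :
    MeasureTheory.IsSetRing R where
  empty_mem := by simpa using (hR A hA A hA).2
  union_mem _ _ hs ht := (hR _ hs _ ht).1
  sdiff_mem _ _ hs ht := (hR _ hs _ ht).2

theorem IsPremeasure.map_empty_s7 (hμ : IsPremeasure R μ) (h0 : ∅ ∈ R) : μ ∅ = 0 := by
  have h := hμ.2 (fun _ => ∅) (fun _ => h0) (fun _ _ _ => by simp [Function.onFun])
    (by simpa using h0)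
  exact tendsto_nhds_unique tendsto_const_nhds h.summable.tendsto_atTop_zero

theorem IsPremeasure.map_union_s7 (hR : IsSetRing R) (hμ : IsPremeasure R μ) {A B : Set X}
    (hA : A ∈ R) (hB : B ∈ R) (hd : Disjoint A B) : μ (A ∪ B) = μ A + μ B := by
  have h0 := (hR.isSetRing hA).empty_mem
  let C := seqCons A (seqCons B fun _ => ∅)
  have hC : ∀ n, C n ∈ R := by rintro (_ | _ | n); exacts [hA, hB, h0]
  have hCd : Pairwise (Function.onFun Disjoint C) := by
    rintro (_ | _ | i) (_ | _ | j) hij <;> simp_all [Function.onFun, C, seqCons, hd.symm]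
  have hCU : ⋃ n, C n = A ∪ B := by simp [C, iUnion_seqCons]
  have h := hμ.2 C hC hCd (hCU ▸ (hR A hA B hB).1)
  simp only [hCU, C, comp_seqCons μ, hμ.map_empty_s7 h0, hasSum_seqCons_iff] at h
  linarith [hasSum_zero.unique h]

theorem IsPremeasure.ofReal_iUnion (hμ : IsPremeasure R μ) {A : ℕ → Set X} (hA : ∀ n, A n ∈ R)
    (hd : Pairwise (Function.onFun Disjoint A)) (hU : ⋃ n, A n ∈ R) :
    ENNReal.ofReal (μ (⋃ n, A n)) = ∑' n, ENNReal.ofReal (μ (A n)) := by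
  have h := hμ.2 A hA hd hU
  rw [← h.tsum_eq, ENNReal.ofReal_tsum_of_nonneg (fun n => hμ.1 _ (hA n)) h.summable]

structure IsMeasureExtension [MeasurableSpace X] (R : Set (Set X)) (μ : Set X → ℝ)
    (M : MeasureTheory.Measure X) : Prop where
  measurableSet : ∀ A ∈ R, MeasurableSet A
  measure_ne_top : ∀ A ∈ R, M A ≠ ⊤
  measureReal_eq : ∀ A ∈ R, M.real A = μ A

theorem IsPremeasure.exists_isMeasureExtension [m : MeasurableSpace X]
    (hm : m = MeasurableSpace.generateFrom R) (hR : IsSetRing R) (hμ : IsPremeasure R μ) :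
    ∃ M : MeasureTheory.Measure X, IsMeasureExtension R μ M := by
  rcases R.eq_empty_or_nonempty with rfl | ⟨A₀, hA₀⟩
  · exact ⟨0, ⟨fun _ h => h.elim, fun _ h => h.elim, fun _ h => h.elim⟩⟩
  have hR' := hR.isSetRing hA₀
  let ν : MeasureTheory.AddContent ℝ≥0∞ R :=
    hR'.addContent_of_union (fun s => ENNReal.ofReal (μ s)) (by simp [hμ.map_empty_s7 hR'.empty_mem])
      fun hs ht hd => by
        rw [hμ.map_union_s7 hR hs ht hd, ENNReal.ofReal_add (hμ.1 _ hs) (hμ.1 _ ht)]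
  have hν : ν.IsSigmaSubadditive :=
    MeasureTheory.isSigmaSubadditive_of_addContent_iUnion_eq_tsum hR'
      fun _ hA hU hd => hμ.ofReal_iUnion hA hd hU
  have hM : ∀ A ∈ R, ν.measure hR'.isSetSemiring hm.le hν A = ENNReal.ofReal (μ A) :=
    fun _ hA => ν.measure_eq hR'.isSetSemiring hm hν hA
  refine ⟨ν.measure hR'.isSetSemiring hm.le hν,
    ⟨fun _ hA => hm ▸ MeasurableSpace.measurableSet_generateFrom hA, fun A hA => ?_, fun A hA => ?_⟩⟩
  · simp [hM A hA]
  · simp [MeasureTheory.measureReal_def, hM A hA, hμ.1 A hA]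

end SetRing

section SimpleFunc

variable {X E : Type*} [AddCommGroup E] [Module ℝ E] {R : Set (Set X)} {μ : Set X → ℝ}

theorem IsSimpleWithIntegral.of_fintype {ι : Type*} [Fintype ι] {f : X → E} {v : E}
    (c : ι → E) (A : ι → Set X) (hA : ∀ i, A i ∈ R)
    (hf : ∀ x, f x = ∑ i, (A i).indicator (fun _ => c i) x) (hv : v = ∑ i, μ (A i) • c i) :
    IsSimpleWithIntegral R μ f v := by
  let e := (Fintype.equivFin ι).symm
  refine ⟨Fintype.card ι, c ∘ e, A ∘ e, fun i => hA (e i), fun x => ?_, ?_⟩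
  · rw [hf x]; exact (e.sum_comp fun i => (A i).indicator (fun _ => c i) x).symm
  · rw [hv]; exact (e.sum_comp fun i => μ (A i) • c i).symm

theorem IsSimpleWithIntegral.zero : IsSimpleWithIntegral R μ (0 : X → E) 0 :=
  ⟨0, Fin.elim0, Fin.elim0, fun i => i.elim0, by simp, by simp⟩

theorem IsSimpleWithIntegral.add {f g : X → E} {v w : E} (hf : IsSimpleWithIntegral R μ f v)
    (hg : IsSimpleWithIntegral R μ g w) : IsSimpleWithIntegral R μ (f + g) (v + w) := by
  obtain ⟨n, c, A, hA, hfA, rfl⟩ := hf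
  obtain ⟨m, d, B, hB, hgB, rfl⟩ := hg
  exact .of_fintype (Sum.elim c d) (Sum.elim A B) (by rintro (i | j) <;> simp [hA, hB])
    (fun x => by simp [Fintype.sum_sum_type, hfA, hgB]) (by simp [Fintype.sum_sum_type])

theorem IsSimpleFunc.finset_sum {ι : Type*} (s : Finset ι) {h : ι → X → E}
    (hh : ∀ i ∈ s, IsSimpleFunc R μ (h i)) : IsSimpleFunc R μ (∑ i ∈ s, h i) :=
  Finset.sum_induction h (IsSimpleFunc R μ) (fun _ _ ⟨v, hv⟩ ⟨w, hw⟩ => ⟨v + w, hv.add hw⟩)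
    ⟨0, .zero⟩ hh

theorem IsSimpleFunc.comp {F : Type*} [AddCommGroup F] [Module ℝ F] (hR : IsSetRing R)
    {f : X → E} (hf : IsSimpleFunc R μ f) (G : E → F) (hG : G 0 = 0) :
    IsSimpleFunc R μ fun x => G (f x) := by
  classical
  obtain ⟨-, n, c, A, hA, hfA, -⟩ := hf
  -- `f` is constant on each atom `{x | support x = T}`, and the atoms with `T ≠ ∅` lie in `R`.
  let support (x : X) : Finset (Fin n) := Finset.univ.filter fun i => x ∈ A i
  let atom (T : Finset (Fin n)) : Set X := {x | support x = T}
  have hf_eq : ∀ x, f x = ∑ i ∈ support x, c i := fun x => by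
    simp [hfA, support, Finset.sum_filter, Set.indicator_apply]
  have hatom : ∀ T : Finset (Fin n), T.Nonempty → atom T ∈ R := by
    rintro T ⟨i₀, hi₀⟩
    have hR' := hR.isSetRing (hA i₀)
    have : atom T = (⋂ i ∈ T, A i) \ ⋃ i ∈ Tᶜ, A i := by
      ext x
      simp only [atom, support, Set.mem_ofPred_eq, Finset.ext_iff, Finset.mem_filter,
        Finset.mem_univ, true_and, Set.mem_sdiff, Set.mem_iInter, Set.mem_iUnion,
        Finset.mem_compl, not_exists]
      exact ⟨fun h => ⟨fun i hi => (h i).2 hi, fun i hi hx => hi ((h i).1 hx)⟩,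
        fun h i => ⟨fun hx => not_not.1 fun hi => h.2 i hi hx, h.1 i⟩⟩
    rw [this]
    exact hR'.sdiff_mem (hR'.biInter_mem T ⟨i₀, hi₀⟩ fun i _ => hA i)
      (hR'.biUnion_mem _ fun i _ => hA i)
  refine ⟨_, .of_fintype (ι := {T : Finset (Fin n) // T.Nonempty})
    (fun T => G (∑ i ∈ T.1, c i)) (fun T => atom T.1) (fun T => hatom T.1 T.2) (fun x => ?_) rfl⟩
  have hmem : ∀ T : {T : Finset (Fin n) // T.Nonempty}, x ∈ atom T.1 ↔ support x = T.1 :=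
    fun _ => Iff.rfl
  by_cases hx : (support x).Nonempty
  · rw [Finset.sum_eq_single ⟨support x, hx⟩]
    · simp [Set.indicator_of_mem (show x ∈ atom (support x) from rfl), hf_eq]
    · intro T _ hT
      exact Set.indicator_of_notMem (fun h => hT (Subtype.ext ((hmem T).1 h).symm)) _
    · simp
  · rw [Finset.not_nonempty_iff_eq_empty] at hx
    rw [hf_eq, hx, Finset.sum_empty, hG]
    refine (Finset.sum_eq_zero fun T _ => Set.indicator_of_notMem (fun h => ?_) _).symm
    exact T.2.ne_empty (((hmem T).1 h).symm.trans hx)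

end SimpleFunc

section Integration

open MeasureTheory

variable {X E : Type*} [MeasurableSpace X] {M : Measure X} [NormedAddCommGroup E]

theorem tsum_lintegral_enorm_ne_top_of_summable_integral_norm {ψ : ℕ → X → E}
    (hψ : ∀ n, Integrable (ψ n) M) (hs : Summable fun n => ∫ x, ‖ψ n x‖ ∂M) :
    ∑' n, ∫⁻ x, ‖ψ n x‖ₑ ∂M ≠ ⊤ := by
  simp_rw [← ofReal_integral_norm_eq_lintegral_enorm (hψ _)]
  rw [← ENNReal.ofReal_tsum_of_nonneg (fun n => integral_nonneg fun _ => norm_nonneg _) hs]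
  exact ENNReal.ofReal_ne_top

theorem ae_summable_norm_of_summable_integral_norm {ψ : ℕ → X → E}
    (hψ : ∀ n, Integrable (ψ n) M) (hs : Summable fun n => ∫ x, ‖ψ n x‖ ∂M) :
    ∀ᵐ x ∂M, Summable fun n => ‖ψ n x‖ :=
  summable_norm_of_tsum_eLpNorm_ne_top le_rfl (fun n => (hψ n).1) <| by
    simpa only [eLpNorm_one_eq_lintegral_enorm] using
      tsum_lintegral_enorm_ne_top_of_summable_integral_norm hψ hs

theorem integrable_tsum_of_summable_integral_norm [CompleteSpace E] {ψ : ℕ → X → E}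
    (hψ : ∀ n, Integrable (ψ n) M) (hs : Summable fun n => ∫ x, ‖ψ n x‖ ∂M) :
    Integrable (fun x => ∑' n, ψ n x) M := by
  refine ⟨aestronglyMeasurable_of_tendsto_ae Filter.atTop
    (f := fun N x => ∑ n ∈ Finset.range N, ψ n x)
    (fun N => (integrable_finsetSum _ fun n _ => hψ n).1) ?_, ?_⟩
  · filter_upwards [ae_summable_norm_of_summable_integral_norm hψ hs] with x hx
    exact hx.of_norm.hasSum.tendsto_sum_nat
  · calc ∫⁻ x, ‖∑' n, ψ n x‖ₑ ∂M ≤ ∫⁻ x, ∑' n, ‖ψ n x‖ₑ ∂M :=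
          lintegral_mono fun _ => enorm_tsum_le_tsum_enorm
      _ = ∑' n, ∫⁻ x, ‖ψ n x‖ₑ ∂M := lintegral_tsum fun n => (hψ n).1.enorm
      _ < ⊤ := (tsum_lintegral_enorm_ne_top_of_summable_integral_norm hψ hs).lt_top

theorem integral_le_tsum_integral_add_tsum_integral {u : X → ℝ} {φ ψ : ℕ → X → ℝ}
    (hu : Integrable u M) (hφ : ∀ n, Integrable (φ n) M)
    (hφs : Summable fun n => ∫ x, ‖φ n x‖ ∂M) (hψ : ∀ n, Integrable (ψ n) M)
    (hψs : Summable fun n => ∫ x, ‖ψ n x‖ ∂M)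
    (hle : ∀ x, Summable (fun n => ‖φ n x‖) → Summable (fun n => ‖ψ n x‖) →
      u x ≤ ∑' n, φ n x + ∑' n, ψ n x) :
    ∫ x, u x ∂M ≤ ∑' n, ∫ x, φ n x ∂M + ∑' n, ∫ x, ψ n x ∂M := by
  have hφi := integrable_tsum_of_summable_integral_norm hφ hφs
  have hψi := integrable_tsum_of_summable_integral_norm hψ hψs
  rw [integral_tsum_of_summable_integral_norm hφ hφs,
    integral_tsum_of_summable_integral_norm hψ hψs, ← integral_add hφi hψi]
  refine integral_mono_ae hu (hφi.add hψi) ?_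
  filter_upwards [ae_summable_norm_of_summable_integral_norm hφ hφs,
    ae_summable_norm_of_summable_integral_norm hψ hψs] with x hφx hψx using hle x hφx hψx

variable {R : Set (Set X)} {μ : Set X → ℝ}

theorem IsMeasureExtension.integrable_indicator (hM : IsMeasureExtension R μ M) {A : Set X}
    (hA : A ∈ R) (c : E) : Integrable (A.indicator fun _ => c) M :=
  (integrable_indicator_iff (hM.measurableSet A hA)).2 (integrableOn_const (hM.measure_ne_top A hA))

variable [NormedSpace ℝ E]

theorem IsSimpleWithIntegral.integrable_s7 (hM : IsMeasureExtension R μ M) {f : X → E} {v : E}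
    (hf : IsSimpleWithIntegral R μ f v) : Integrable f M := by
  obtain ⟨n, c, A, hA, hfA, -⟩ := hf
  rw [funext hfA]
  exact integrable_finsetSum _ fun i _ => hM.integrable_indicator (hA i) (c i)

theorem IsSimpleWithIntegral.integral_eq_s7 [CompleteSpace E] (hM : IsMeasureExtension R μ M)
    {f : X → E} {v : E} (hf : IsSimpleWithIntegral R μ f v) : ∫ x, f x ∂M = v := by
  obtain ⟨n, c, A, hA, hfA, rfl⟩ := hf
  rw [funext hfA, integral_finsetSum _ fun i _ => hM.integrable_indicator (hA i) (c i)]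
  refine Finset.sum_congr rfl fun i _ => ?_
  rw [integral_indicator_const _ (hM.measurableSet _ (hA i)), hM.measureReal_eq _ (hA i)]

end Integration

section Monotonicity

variable {X : Type*} {R : Set (Set X)} {μ : Set X → ℝ}

theorem IsSimpleWithIntegral.le_tsum_add_tsum (hR : IsSetRing R) (hμ : IsPremeasure R μ)
    {u : X → ℝ} {w : ℝ} (hu : IsSimpleWithIntegral R μ u w) {φ ψ : ℕ → X → ℝ} {I J a b : ℕ → ℝ}
    (hφ : ∀ n, IsSimpleWithIntegral R μ (φ n) (I n))
    (ha : ∀ n, IsSimpleWithIntegral R μ (fun x => ‖φ n x‖) (a n)) (ha_sum : Summable a)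
    (hψ : ∀ n, IsSimpleWithIntegral R μ (ψ n) (J n))
    (hb : ∀ n, IsSimpleWithIntegral R μ (fun x => ‖ψ n x‖) (b n)) (hb_sum : Summable b)
    (hle : ∀ x, Summable (fun n => ‖φ n x‖) → Summable (fun n => ‖ψ n x‖) →
      u x ≤ ∑' n, φ n x + ∑' n, ψ n x) :
    w ≤ ∑' n, I n + ∑' n, J n := by
  let _ : MeasurableSpace X := MeasurableSpace.generateFrom R
  obtain ⟨M, hM⟩ := hμ.exists_isMeasureExtension rfl hR
  have hI : ∀ n, ∫ x, φ n x ∂M = I n := fun n => (hφ n).integral_eq_s7 hM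
  have hJ : ∀ n, ∫ x, ψ n x ∂M = J n := fun n => (hψ n).integral_eq_s7 hM
  have ha' : ∀ n, ∫ x, ‖φ n x‖ ∂M = a n := fun n => (ha n).integral_eq_s7 hM
  have hb' : ∀ n, ∫ x, ‖ψ n x‖ ∂M = b n := fun n => (hb n).integral_eq_s7 hM
  have key := integral_le_tsum_integral_add_tsum_integral (hu.integrable_s7 hM)
    (fun n => (hφ n).integrable_s7 hM) (by simpa only [ha'] using ha_sum)
    (fun n => (hψ n).integrable_s7 hM) (by simpa only [hb'] using hb_sum) hle
  simpa only [hu.integral_eq_s7 hM, hI, hJ] using key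

end Monotonicity

theorem hasSum_seqCons_sum_range_apply {X E : Type*} [NormedAddCommGroup E] {f : X → E}
    {h : ℕ → X → E} (hfh : ∀ x, Summable (fun n => ‖h n x‖) → HasSum (fun n => h n x) (f x))
    (N : ℕ) (x : X)
    (hx : Summable fun n => ‖seqCons (∑ i ∈ Finset.range N, h i) (fun k => h (k + N)) n x‖) :
    HasSum (fun n => seqCons (∑ i ∈ Finset.range N, h i) (fun k => h (k + N)) n x) (f x) := by
  rw [comp_seqCons (fun g : X → E => ‖g x‖), summable_seqCons_iff,
    summable_nat_add_iff (f := fun n => ‖h n x‖)] at hx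
  rw [comp_seqCons (fun g : X → E => g x), Finset.sum_apply, hasSum_seqCons_sum_range_iff]
  exact hfh x hx

theorem stmt7_general {X E : Type*} [NormedAddCommGroup E] [NormedSpace ℝ E]
    {R : Set (Set X)} {μ : Set X → ℝ} (hR : IsSetRing R) (hμ : IsPremeasure R μ)
    (f : X → E) (hf : BochnerIntegrable R μ f)
    (c : ℝ) (hc : HasBochnerIntegral R μ (fun x => ‖f x‖) c)
    (ε : ℝ) (hε : 0 < ε) :
    ∃ (g : ℕ → X → E) (d : ℕ → ℝ), SeriesExpansion R μ f g ∧
      (∀ n, IsSimpleWithIntegral R μ (fun x => ‖g n x‖) (d n)) ∧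
      Summable d ∧ ∑' n, d n ≤ c + ε := by
  obtain ⟨h, hh, ⟨b, hb, hb_sum⟩, hfh⟩ := hf
  obtain ⟨φ, ⟨-, ⟨a, ha, ha_sum⟩, hφf⟩, J, hJ, hJc⟩ := hc
  obtain ⟨N, hN⟩ : ∃ N, ∑' k, b (k + N) < ε / 2 :=
    ((tendsto_sum_nat_add b).eventually (gt_mem_nhds (half_pos hε))).exists
  have hb_tail : Summable fun k => b (k + N) := (summable_nat_add_iff N).2 hb_sum
  have hs : IsSimpleFunc R μ (∑ i ∈ Finset.range N, h i) := .finset_sum _ fun i _ => hh i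
  obtain ⟨w, hw⟩ := hs.comp hR (‖·‖) norm_zero
  have hw_le : w ≤ c + ∑' k, b (k + N) := by
    rw [← hJc.tsum_eq]
    refine hw.le_tsum_add_tsum hR hμ hJ ha ha_sum (fun k => hb (k + N))
      (by simpa only [norm_norm] using fun k => hb (k + N)) hb_tail fun x hφx hhx => ?_
    simp only [norm_norm] at hhx
    rw [(hφf x hφx).tsum_eq, Finset.sum_apply]
    exact norm_sum_range_le_of_hasSum (hfh x ((summable_nat_add_iff N).1 hhx)) N hhx
  have hgd : ∀ n, IsSimpleWithIntegral R μ
      (fun x => ‖seqCons (∑ i ∈ Finset.range N, h i) (fun k => h (k + N)) n x‖)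
      (seqCons w (fun k => b (k + N)) n) := by
    rintro (_ | k); exacts [hw, hb (k + N)]
  have hd : Summable (seqCons w fun k => b (k + N)) := summable_seqCons_iff.2 hb_tail
  refine ⟨_, _, ⟨?_, ⟨_, hgd, hd⟩, hasSum_seqCons_sum_range_apply hfh N⟩, hgd, hd, ?_⟩
  · rintro (_ | k); exacts [hs, hh (k + N)]
  · rw [tsum_seqCons hb_tail]
    linarith

/-- For every `ε > 0` there is an expansion `f ≃ ∑ gₙ` with `∑ ∫‖gₙ‖ ≤ ∫‖f‖ + ε`. -/
theorem stmt7 {X E : Type*} [NormedAddCommGroup E] [NormedSpace ℝ E] [CompleteSpace E]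
    {R : Set (Set X)} {μ : Set X → ℝ} (hR : IsSetRing R) (hμ : IsPremeasure R μ)
    (f : X → E) (hf : BochnerIntegrable R μ f)
    (c : ℝ) (hc : HasBochnerIntegral R μ (fun x => ‖f x‖) c)
    (ε : ℝ) (hε : 0 < ε) :
    ∃ (g : ℕ → X → E) (d : ℕ → ℝ), SeriesExpansion R μ f g ∧
      (∀ n, IsSimpleWithIntegral R μ (fun x => ‖g n x‖) (d n)) ∧
      Summable d ∧ ∑' n, d n ≤ c + ε :=
  stmt7_general hR hμ f hf c hc ε hε
end
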